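/- arXiv:1107.0920 — 9 statements merged into one kernel-verified Lean document; each statement's English description precedes it below -/
import Mathlib

section
/- Let A be an associative unital k-algebra with dim A ≥ 2, and α, β, γ ∈ k. The map R(a⊗b) = α·ab⊗1 + β·1⊗ab − γ·a⊗b is an invertible solution of the braid equation R¹²R²³R¹² = R²³R¹²R²³ if and only if one of the following holds: (i) α = γ ≠ 0 and β ≠ 0; (ii) β = γ ≠ 0 and α ≠ 0; (iii) α = β = 0 and γ ≠ 0. -/
open TensorProduct LinearMap

noncomputable section

variable {k : Type*} [Field k]

/-- `R ⊗ I` acting on the first two factors of `V ⊗ (V ⊗ V)`. -/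
def leg12 {V : Type*} [AddCommGroup V] [Module k V]
    (R : V ⊗[k] V →ₗ[k] V ⊗[k] V) :
    V ⊗[k] (V ⊗[k] V) →ₗ[k] V ⊗[k] (V ⊗[k] V) :=
  (TensorProduct.assoc k V V V).toLinearMap ∘ₗ R.rTensor V ∘ₗ
    (TensorProduct.assoc k V V V).symm.toLinearMap

/-- `I ⊗ R` acting on the last two factors. -/
def leg23 {V : Type*} [AddCommGroup V] [Module k V]
    (R : V ⊗[k] V →ₗ[k] V ⊗[k] V) :
    V ⊗[k] (V ⊗[k] V) →ₗ[k] V ⊗[k] (V ⊗[k] V) :=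
  R.lTensor V

/-- `R¹³ = (I⊗τ)(R⊗I)(I⊗τ)`. -/
def leg13 {V : Type*} [AddCommGroup V] [Module k V]
    (R : V ⊗[k] V →ₗ[k] V ⊗[k] V) :
    V ⊗[k] (V ⊗[k] V) →ₗ[k] V ⊗[k] (V ⊗[k] V) :=
  ((TensorProduct.comm k V V).toLinearMap.lTensor V) ∘ₗ leg12 R ∘ₗ
    ((TensorProduct.comm k V V).toLinearMap.lTensor V)

/-! `R_{α,β,γ}` satisfies `R² = (α + β - 2γ) R + γ (α + β - γ)`, so it is invertible as soon as
`γ (α + β - γ) ≠ 0`; conversely `1 ⊗ 1` and `x ⊗ 1 - 1 ⊗ x` (for `x ∉ k·1`) are eigenvectors with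
eigenvalues `α + β - γ` and `-γ`. On `a ⊗ b ⊗ c` the two sides of the braid equation differ by
`α(γ-α)(γ-β) (ab ⊗ 1 ⊗ c - a ⊗ bc ⊗ 1) + β(γ-α)(γ-β) (1 ⊗ ab ⊗ c - a ⊗ 1 ⊗ bc)`, and evaluating at
`1 ⊗ 1 ⊗ x` and `x ⊗ 1 ⊗ 1` shows that this vanishes identically only if both coefficients do. -/

section VectorSpace

variable {V : Type*} [AddCommGroup V] [Module k V]

theorem exists_dual_pair_of_one_lt_rank (h : 1 < Module.rank k V) {v : V} (hv : v ≠ 0) :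
    ∃ (x : V) (f g : Module.Dual k V), f v = 0 ∧ f x = 1 ∧ g v = 1 := by
  have hspan : Module.rank k (k ∙ v) < Module.rank k V :=
    lt_of_le_of_lt (by simpa using rank_span_le (R := k) {v}) h
  obtain ⟨x, hx⟩ : ∃ x : V, x ∉ k ∙ v := by
    obtain ⟨x, hx⟩ := Submodule.exists_smul_notMem_of_rank_lt hspan
    exact ⟨x, by simpa using hx 1 one_ne_zero⟩
  obtain ⟨f, hf⟩ := Module.Projective.exists_dual_eq_one k
    (x := (k ∙ v).mkQ x) (by simpa [Submodule.Quotient.mk_eq_zero] using hx)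
  obtain ⟨g, hg⟩ := Module.Projective.exists_dual_eq_one k hv
  refine ⟨x, f ∘ₗ (k ∙ v).mkQ, g, ?_, hf, hg⟩
  simp [(Submodule.Quotient.mk_eq_zero _).2 (Submodule.mem_span_singleton_self v)]

theorem LinearMap.bijective_of_apply_apply_eq {T : V →ₗ[k] V} {a b : k} (hb : b ≠ 0)
    (hT : ∀ v, T (T v) = a • T v + b • v) : Function.Bijective T := by
  refine ⟨(injective_iff_map_eq_zero T).2 fun v hv => ?_, fun v => ?_⟩
  · simpa [hv, hb, eq_comm] using hT v
  · refine ⟨b⁻¹ • (T v - a • v), ?_⟩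
    rw [map_smul, map_sub, map_smul, hT, add_sub_cancel_left, smul_smul, inv_mul_cancel₀ hb,
      one_smul]

end VectorSpace

section TensorMulOperator

variable {A : Type*} [Ring A] [Algebra k A] (α β γ : k)

/-- `R_{α,β,γ}`. -/
def tensorMulOperator : A ⊗[k] A →ₗ[k] A ⊗[k] A :=
  (α • (TensorProduct.mk k A A).flip 1 + β • TensorProduct.mk k A A 1) ∘ₗ LinearMap.mul' k A -
    γ • LinearMap.id

@[simp]
theorem tensorMulOperator_tmul (a b : A) :
    tensorMulOperator α β γ (a ⊗ₜ[k] b) =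
      α • ((a * b) ⊗ₜ[k] (1 : A)) + β • ((1 : A) ⊗ₜ[k] (a * b)) - γ • (a ⊗ₜ[k] b) := by
  simp [tensorMulOperator]

theorem tensorMulOperator_apply_apply (v : A ⊗[k] A) :
    tensorMulOperator α β γ (tensorMulOperator α β γ v) =
      (α + β - 2 * γ) • tensorMulOperator α β γ v + (γ * (α + β - γ)) • v := by
  induction v using TensorProduct.induction_on with
  | zero => simp
  | tmul a b =>
    simp only [tensorMulOperator_tmul, map_add, map_sub, map_smul, mul_one, one_mul]
    module
  | add v w hv hw => simp only [map_add, hv, hw]; module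

theorem tensorMulOperator_one_tmul_one :
    tensorMulOperator α β γ ((1 : A) ⊗ₜ[k] (1 : A)) = (α + β - γ) • ((1 : A) ⊗ₜ[k] (1 : A)) := by
  simp only [tensorMulOperator_tmul, mul_one]
  module

theorem tensorMulOperator_tmul_one_sub_one_tmul (a : A) :
    tensorMulOperator α β γ (a ⊗ₜ[k] (1 : A) - (1 : A) ⊗ₜ[k] a) =
      (-γ) • (a ⊗ₜ[k] (1 : A) - (1 : A) ⊗ₜ[k] a) := by
  simp only [map_sub, tensorMulOperator_tmul, mul_one, one_mul]
  module

theorem leg12_leg23_leg12_sub_leg23_leg12_leg23_tmul (a b c : A) :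
    leg12 (tensorMulOperator α β γ) (leg23 (tensorMulOperator α β γ)
        (leg12 (tensorMulOperator α β γ) (a ⊗ₜ[k] (b ⊗ₜ[k] c)))) -
      leg23 (tensorMulOperator α β γ) (leg12 (tensorMulOperator α β γ)
        (leg23 (tensorMulOperator α β γ) (a ⊗ₜ[k] (b ⊗ₜ[k] c)))) =
    (α * ((γ - α) * (γ - β))) •
        ((a * b) ⊗ₜ[k] ((1 : A) ⊗ₜ[k] c) - a ⊗ₜ[k] ((b * c) ⊗ₜ[k] (1 : A))) +
      (β * ((γ - α) * (γ - β))) •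
        ((1 : A) ⊗ₜ[k] ((a * b) ⊗ₜ[k] c) - a ⊗ₜ[k] ((1 : A) ⊗ₜ[k] (b * c))) := by
  simp only [leg12, leg23, LinearMap.comp_apply, LinearEquiv.coe_coe,
    TensorProduct.assoc_symm_tmul, TensorProduct.assoc_tmul, rTensor_tmul, lTensor_tmul,
    tensorMulOperator_tmul, map_add, map_sub, map_smul, tmul_add, tmul_sub, add_tmul, sub_tmul,
    smul_tmul, tmul_smul, mul_one, one_mul, mul_assoc]
  module

theorem exists_dual_pair_one (h : 1 < Module.rank k A) :
    ∃ (x : A) (f g : Module.Dual k A), f 1 = 0 ∧ f x = 1 ∧ g 1 = 1 :=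
  have : Nontrivial A := rank_pos_iff_nontrivial.1 (zero_lt_one.trans h)
  exists_dual_pair_of_one_lt_rank h one_ne_zero

theorem bijective_tensorMulOperator_iff (h : 1 < Module.rank k A) :
    Function.Bijective (tensorMulOperator (A := A) α β γ) ↔ γ ≠ 0 ∧ α + β ≠ γ := by
  refine ⟨fun hbij => ?_, fun ⟨hγ, hαβ⟩ => ?_⟩
  · obtain ⟨x, f, g, hf1, hfx, hg1⟩ := exists_dual_pair_one h
    have eigenvalue_ne_zero {c : k} {v : A ⊗[k] A} (hv : tensorMulOperator α β γ v = c • v)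
        (hne : v ≠ 0) : c ≠ 0 := fun hc =>
      hne (hbij.1 (by rw [hv, hc, zero_smul, map_zero]))
    refine ⟨?_, ?_⟩
    · refine neg_ne_zero.1 (eigenvalue_ne_zero (tensorMulOperator_tmul_one_sub_one_tmul α β γ x)
        fun h0 => ?_)
      simpa [hf1, hfx, hg1] using congrArg (dualDistrib k A A (f ⊗ₜ g)) h0
    · refine sub_ne_zero.1 (eigenvalue_ne_zero (tensorMulOperator_one_tmul_one α β γ)
        fun h0 => ?_)
      simpa [hg1] using congrArg (dualDistrib k A A (g ⊗ₜ g)) h0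
  · exact LinearMap.bijective_of_apply_apply_eq (mul_ne_zero hγ (sub_ne_zero.2 hαβ))
      (tensorMulOperator_apply_apply α β γ)

theorem braid_tensorMulOperator_iff (h : 1 < Module.rank k A) :
    leg12 (tensorMulOperator α β γ) ∘ₗ leg23 (tensorMulOperator α β γ) ∘ₗ
        leg12 (tensorMulOperator (A := A) α β γ) =
      leg23 (tensorMulOperator α β γ) ∘ₗ leg12 (tensorMulOperator α β γ) ∘ₗ
        leg23 (tensorMulOperator α β γ) ↔
    α * ((γ - α) * (γ - β)) = 0 ∧ β * ((γ - α) * (γ - β)) = 0 := by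
  have hdefect := leg12_leg23_leg12_sub_leg23_leg12_leg23_tmul (A := A) α β γ
  refine ⟨fun hbraid => ?_, fun ⟨hα, hβ⟩ => ?_⟩
  · obtain ⟨x, f, g, hf1, hfx, hg1⟩ := exists_dual_pair_one h
    have hzero (a b c : A) := (hdefect a b c).symm.trans
      (sub_eq_zero.2 (LinearMap.congr_fun hbraid (a ⊗ₜ[k] (b ⊗ₜ[k] c))))
    let φ := dualDistrib k A (A ⊗[k] A) (g ⊗ₜ dualDistrib k A A (f ⊗ₜ g))
    constructor
    · simpa [φ, hf1, hfx, hg1] using congrArg φ (hzero 1 1 x)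
    · simpa [φ, hf1, hfx, hg1] using congrArg φ (hzero x 1 1)
  · refine TensorProduct.ext_threefold' fun a b c => ?_
    simpa [hα, hβ, sub_eq_zero] using hdefect a b c

end TensorMulOperator

theorem yangBaxter_parameter_conditions_iff {α β γ : k} :
    ((γ ≠ 0 ∧ α + β ≠ γ) ∧ α * ((γ - α) * (γ - β)) = 0 ∧ β * ((γ - α) * (γ - β)) = 0) ↔
      ((α = γ ∧ γ ≠ 0 ∧ β ≠ 0) ∨ (β = γ ∧ γ ≠ 0 ∧ α ≠ 0) ∨ (α = 0 ∧ β = 0 ∧ γ ≠ 0)) := by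
  constructor
  · rintro ⟨⟨hγ, hαβ⟩, hα, hβ⟩
    by_cases hprod : (γ - α) * (γ - β) = 0
    · rcases mul_eq_zero.1 hprod with h | h
      · exact Or.inl ⟨(sub_eq_zero.1 h).symm, hγ, fun h0 => hαβ (by linear_combination -h + h0)⟩
      · exact Or.inr (Or.inl
          ⟨(sub_eq_zero.1 h).symm, hγ, fun h0 => hαβ (by linear_combination -h + h0)⟩)
    · exact Or.inr (Or.inr ⟨(mul_eq_zero.1 hα).resolve_right hprod,
        (mul_eq_zero.1 hβ).resolve_right hprod, hγ⟩)
  · rintro (⟨rfl, hγ, hβ⟩ | ⟨rfl, hγ, hα⟩ | ⟨rfl, rfl, hγ⟩)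
    · exact ⟨⟨hγ, by simpa using hβ⟩, by ring, by ring⟩
    · exact ⟨⟨hγ, by simpa using hα⟩, by ring, by ring⟩
    · exact ⟨⟨hγ, by simpa using hγ.symm⟩, by ring, by ring⟩

theorem dascalescu_nichita_yang_baxter_classification
    (A : Type*) [Ring A] [Algebra k A] (hdim : 2 ≤ Module.rank k A)
    (α β γ : k) (R : A ⊗[k] A →ₗ[k] A ⊗[k] A)
    (hR : ∀ a b : A, R (a ⊗ₜ[k] b) =
      α • ((a * b) ⊗ₜ[k] (1 : A)) + β • ((1 : A) ⊗ₜ[k] (a * b)) - γ • (a ⊗ₜ[k] b)) :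
    (Function.Bijective R ∧
      leg12 R ∘ₗ leg23 R ∘ₗ leg12 R = leg23 R ∘ₗ leg12 R ∘ₗ leg23 R) ↔
    ((α = γ ∧ γ ≠ 0 ∧ β ≠ 0) ∨ (β = γ ∧ γ ≠ 0 ∧ α ≠ 0) ∨
      (α = 0 ∧ β = 0 ∧ γ ≠ 0)) := by
  obtain rfl : R = tensorMulOperator α β γ :=
    TensorProduct.ext' fun a b => by rw [hR, tensorMulOperator_tmul]
  have hrank : 1 < Module.rank k A := lt_of_lt_of_le (by norm_num) hdim
  rw [bijective_tensorMulOperator_iff α β γ hrank, braid_tensorMulOperator_iff α β γ hrank]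
  exact yangBaxter_parameter_conditions_iff

end
end

section
/- Let A be an associative unital k-algebra and p, q ∈ k. Define R(u,v)(a⊗b) = p(u−v)·1⊗ab + q(u−v)·ab⊗1 − (pu−qv)·b⊗a for u, v ∈ k. Then R satisfies the two-parameter (colored) quantum Yang-Baxter equation: R¹²(u,v)R¹³(u,w)R²³(v,w) = R²³(v,w)R¹³(u,w)R¹²(u,v) for all u, v, w ∈ k. -/
/-! Each leg of `R` sends a pure tensor `a ⊗ b ⊗ c` to a combination of three pure tensors whose
entries are words in `a, b, c, 1`, so both sides of the equation expand into 27 such terms.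
Once the words are normalised by associativity and unitality, the two expansions agree as
linear combinations with polynomial coefficients in `p, q, u, v, w`. -/

open TensorProduct LinearMap

noncomputable section

variable {k : Type*} [Field k]

section Legs

variable {A : Type*} [Ring A] [Algebra k A] {R : A ⊗[k] A →ₗ[k] A ⊗[k] A} {α β γ : k}
  (hR : ∀ a b : A, R (a ⊗ₜ[k] b) =
    α • ((1 : A) ⊗ₜ[k] (a * b)) + β • ((a * b) ⊗ₜ[k] (1 : A)) - γ • (b ⊗ₜ[k] a))
include hR

theorem leg12_tmul_tmul (a b c : A) :
    leg12 R (a ⊗ₜ[k] (b ⊗ₜ[k] c)) =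
      α • ((1 : A) ⊗ₜ[k] ((a * b) ⊗ₜ[k] c)) + β • ((a * b) ⊗ₜ[k] ((1 : A) ⊗ₜ[k] c)) -
        γ • (b ⊗ₜ[k] (a ⊗ₜ[k] c)) := by
  simp only [leg12, coe_comp, LinearEquiv.coe_coe, Function.comp_apply, assoc_symm_tmul,
    rTensor_tmul, hR, sub_tmul, add_tmul, smul_tmul', map_sub, map_add, assoc_tmul]

theorem leg13_tmul_tmul (a b c : A) :
    leg13 R (a ⊗ₜ[k] (b ⊗ₜ[k] c)) =
      α • ((1 : A) ⊗ₜ[k] (b ⊗ₜ[k] (a * c))) + β • ((a * c) ⊗ₜ[k] (b ⊗ₜ[k] (1 : A))) -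
        γ • (c ⊗ₜ[k] (b ⊗ₜ[k] a)) := by
  simp only [leg13, coe_comp, LinearEquiv.coe_coe, Function.comp_apply, lTensor_tmul,
    comm_tmul, leg12_tmul_tmul hR, map_sub, map_add, map_smul]

theorem leg23_tmul_tmul (a b c : A) :
    leg23 R (a ⊗ₜ[k] (b ⊗ₜ[k] c)) =
      α • (a ⊗ₜ[k] ((1 : A) ⊗ₜ[k] (b * c))) + β • (a ⊗ₜ[k] ((b * c) ⊗ₜ[k] (1 : A))) -
        γ • (a ⊗ₜ[k] (c ⊗ₜ[k] b)) := by
  simp only [leg23, lTensor_tmul, hR, tmul_sub, tmul_add, tmul_smul]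

end Legs

theorem colored_qybe_from_algebra
    (A : Type*) [Ring A] [Algebra k A] (p q : k)
    (R : k → k → (A ⊗[k] A →ₗ[k] A ⊗[k] A))
    (hR : ∀ u v : k, ∀ a b : A, R u v (a ⊗ₜ[k] b) =
      (p * (u - v)) • ((1 : A) ⊗ₜ[k] (a * b)) +
      (q * (u - v)) • ((a * b) ⊗ₜ[k] (1 : A)) -
      (p * u - q * v) • (b ⊗ₜ[k] a)) :
    ∀ u v w : k,
      leg12 (R u v) ∘ₗ leg13 (R u w) ∘ₗ leg23 (R v w) =
      leg23 (R v w) ∘ₗ leg13 (R u w) ∘ₗ leg12 (R u v) := by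
  intro u v w
  ext a b c
  simp only [AlgebraTensorModule.curry_apply, curry_apply, coe_restrictScalars, coe_comp,
    Function.comp_apply, map_add, map_sub, map_smul,
    leg12_tmul_tmul (hR u v), leg13_tmul_tmul (hR u w), leg23_tmul_tmul (hR v w),
    one_mul, mul_one, mul_assoc]
  module
end
end

section
/- Let A be an associative unital k-algebra, p, q ∈ k, and u, v ∈ k with pu ≠ qv and qu ≠ pv. Then the operator R(u,v)(a⊗b) = p(u−v)·1⊗ab + q(u−v)·ab⊗1 − (pu−qv)·b⊗a is invertible, with inverse R⁻¹(u,v)(a⊗b) = [p(u−v)/((qu−pv)(pu−qv))]·ba⊗1 + [q(u−v)/((qu−pv)(pu−qv))]·1⊗ba − [1/(pu−qv)]·b⊗a. -/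
/-!
Write `R = x L + y M - z τ` and `S = α M τ + β L τ - γ τ`, with `τ` the flip,
`L (a ⊗ b) = 1 ⊗ ab` and `M (a ⊗ b) = ab ⊗ 1`. Since `τ L = M`, `τ M = L` and `X Y = X` for
`X, Y ∈ {L, M}`, the composite `S R` lies in the span of `1, L, M` and `R S` in the span of
`1, L τ, M τ`, with coefficients depending only on `x + y - z` and `α + β - γ`. For the given
coefficients these are `qu - pv` and `1 / (qu - pv)`, and then every coefficient except that
of `1` vanishes, while that of `1` is `γ z = 1`.
-/

open TensorProduct LinearMap

noncomputable section

variable {k : Type*} [Field k]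

section

variable {A : Type*} [Ring A] [Algebra k A] {R S : A ⊗[k] A →ₗ[k] A ⊗[k] A}
  {x y z α β γ : k}

theorem apply_apply_tmul_of_forms
    (hR : ∀ a b : A, R (a ⊗ₜ[k] b) =
      x • ((1 : A) ⊗ₜ[k] (a * b)) + y • ((a * b) ⊗ₜ[k] (1 : A)) - z • (b ⊗ₜ[k] a))
    (hS : ∀ a b : A, S (a ⊗ₜ[k] b) =
      α • ((b * a) ⊗ₜ[k] (1 : A)) + β • ((1 : A) ⊗ₜ[k] (b * a)) - γ • (b ⊗ₜ[k] a))
    (a b : A) :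
    S (R (a ⊗ₜ[k] b)) =
      (α * (x + y - z) - γ * x) • ((a * b) ⊗ₜ[k] (1 : A)) +
      (β * (x + y - z) - γ * y) • ((1 : A) ⊗ₜ[k] (a * b)) + (γ * z) • (a ⊗ₜ[k] b) := by
  simp only [hR, hS, map_add, map_sub, map_smul, one_mul, mul_one, smul_add, smul_sub, smul_smul]
  match_scalars <;> ring

theorem apply_apply_tmul_of_forms'
    (hR : ∀ a b : A, R (a ⊗ₜ[k] b) =
      x • ((1 : A) ⊗ₜ[k] (a * b)) + y • ((a * b) ⊗ₜ[k] (1 : A)) - z • (b ⊗ₜ[k] a))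
    (hS : ∀ a b : A, S (a ⊗ₜ[k] b) =
      α • ((b * a) ⊗ₜ[k] (1 : A)) + β • ((1 : A) ⊗ₜ[k] (b * a)) - γ • (b ⊗ₜ[k] a))
    (a b : A) :
    R (S (a ⊗ₜ[k] b)) =
      (x * (α + β - γ) - z * α) • ((1 : A) ⊗ₜ[k] (b * a)) +
      (y * (α + β - γ) - z * β) • ((b * a) ⊗ₜ[k] (1 : A)) + (z * γ) • (a ⊗ₜ[k] b) := by
  simp only [hR, hS, map_add, map_sub, map_smul, one_mul, mul_one, smul_add, smul_sub, smul_smul]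
  match_scalars <;> ring

end

theorem colored_operator_inverse
    (A : Type*) [Ring A] [Algebra k A] (p q u v : k)
    (h1 : p * u ≠ q * v) (h2 : q * u ≠ p * v)
    (R S : A ⊗[k] A →ₗ[k] A ⊗[k] A)
    (hR : ∀ a b : A, R (a ⊗ₜ[k] b) =
      (p * (u - v)) • ((1 : A) ⊗ₜ[k] (a * b)) +
      (q * (u - v)) • ((a * b) ⊗ₜ[k] (1 : A)) -
      (p * u - q * v) • (b ⊗ₜ[k] a))
    (hS : ∀ a b : A, S (a ⊗ₜ[k] b) =
      (p * (u - v) / ((q * u - p * v) * (p * u - q * v))) • ((b * a) ⊗ₜ[k] (1 : A)) +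
      (q * (u - v) / ((q * u - p * v) * (p * u - q * v))) • ((1 : A) ⊗ₜ[k] (b * a)) -
      (1 / (p * u - q * v)) • (b ⊗ₜ[k] a)) :
    S ∘ₗ R = LinearMap.id ∧ R ∘ₗ S = LinearMap.id := by
  have hg : p * u - q * v ≠ 0 := sub_ne_zero.mpr h1
  have hd : q * u - p * v ≠ 0 := sub_ne_zero.mpr h2
  have hxyz : p * (u - v) + q * (u - v) - (p * u - q * v) = q * u - p * v := by ring
  generalize q * u - p * v = d at hd hxyz hS
  generalize p * u - q * v = g at hg hxyz hR hS
  have hαβγ : p * (u - v) / (d * g) + q * (u - v) / (d * g) - 1 / g = 1 / d := by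
    field_simp
    linear_combination hxyz
  constructor <;> refine TensorProduct.ext' fun a b => ?_
  · rw [comp_apply, apply_apply_tmul_of_forms hR hS, hxyz, id_apply]
    match_scalars <;> field_simp <;> ring
  · rw [comp_apply, apply_apply_tmul_of_forms' hR hS, hαβγ, id_apply]
    match_scalars <;> field_simp <;> ring
end
end

section
/- Let A be an associative unital ℝ-algebra and q ∈ ℝ. The operator S(λ)(a⊗b) = (e^λ − 1)·1⊗ab + q(e^λ − 1)·ab⊗1 − (e^λ − q)·b⊗a satisfies the one-parameter (additive) Yang-Baxter equation S¹²(λ₁−λ₂)S¹³(λ₁−λ₃)S²³(λ₂−λ₃) = S²³(λ₂−λ₃)S¹³(λ₁−λ₃)S¹²(λ₁−λ₂) for all λ₁, λ₂, λ₃ ∈ ℝ. -/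
/-!
Writing `z = exp λ`, the operator `S(λ)` depends on `λ` only through `z`, and the three spectral
parameters multiply: `exp (λ₁ - λ₃) = exp (λ₁ - λ₂) * exp (λ₂ - λ₃)`. So it suffices to prove the
multiplicative Yang–Baxter equation `R¹²(x) R¹³(xy) R²³(y) = R²³(y) R¹³(xy) R¹²(x)` for
`R(z)(a ⊗ b) = (z - 1) 1 ⊗ ab + q(z - 1) ab ⊗ 1 - (z - q) b ⊗ a` over any field. On a pure tensor
`a ⊗ b ⊗ c` both sides expand, by associativity and unitality of `A`, into combinations of the same
pure tensors, and the coefficients agree as polynomials in `x`, `y`, `q`.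
-/

open TensorProduct LinearMap

noncomputable section

variable {k : Type*} [Field k]

section Legs

variable {V : Type*} [AddCommGroup V] [Module k V] (R : V ⊗[k] V →ₗ[k] V ⊗[k] V) (a b c : V)

@[simp]
theorem leg12_tmul :
    leg12 R (a ⊗ₜ (b ⊗ₜ c)) = TensorProduct.assoc k V V V (R (a ⊗ₜ b) ⊗ₜ c) := rfl

@[simp]
theorem leg23_tmul : leg23 R (a ⊗ₜ (b ⊗ₜ c)) = a ⊗ₜ R (b ⊗ₜ c) := rfl

@[simp]
theorem leg13_tmul :
    leg13 R (a ⊗ₜ (b ⊗ₜ c)) =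
      (TensorProduct.comm k V V).toLinearMap.lTensor V
        (TensorProduct.assoc k V V V (R (a ⊗ₜ c) ⊗ₜ b)) := rfl

end Legs

section RMatrix

variable {K A : Type*} [CommRing K] [Ring A] [Algebra K A]

variable (A) in
def rMatrix (q z : K) : A ⊗[K] A →ₗ[K] A ⊗[K] A :=
  (z - 1) • (TensorProduct.mk K A A 1 ∘ₗ LinearMap.mul' K A) +
    (q * (z - 1)) • ((TensorProduct.mk K A A).flip 1 ∘ₗ LinearMap.mul' K A) -
    (z - q) • (TensorProduct.comm K A A).toLinearMap

@[simp]
theorem rMatrix_tmul (q z : K) (a b : A) :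
    rMatrix A q z (a ⊗ₜ b) =
      (z - 1) • ((1 : A) ⊗ₜ (a * b)) + (q * (z - 1)) • ((a * b) ⊗ₜ (1 : A)) -
        (z - q) • (b ⊗ₜ a) := rfl

end RMatrix

theorem rMatrix_yangBaxter {A : Type*} [Ring A] [Algebra k A] (q x y : k) :
    leg12 (rMatrix A q x) ∘ₗ leg13 (rMatrix A q (x * y)) ∘ₗ leg23 (rMatrix A q y) =
      leg23 (rMatrix A q y) ∘ₗ leg13 (rMatrix A q (x * y)) ∘ₗ leg12 (rMatrix A q x) := by
  ext a b c
  simp only [TensorProduct.AlgebraTensorModule.curry_apply, TensorProduct.curry_apply,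
    LinearMap.restrictScalars_apply, LinearMap.coe_comp, Function.comp_apply,
    leg12_tmul, leg13_tmul, leg23_tmul, rMatrix_tmul,
    TensorProduct.tmul_add, TensorProduct.add_tmul, TensorProduct.tmul_sub,
    TensorProduct.sub_tmul, TensorProduct.tmul_smul, TensorProduct.smul_tmul',
    map_add, map_sub, map_smul, LinearEquiv.coe_coe, TensorProduct.assoc_tmul, TensorProduct.comm_tmul,
    LinearMap.lTensor_tmul, smul_mul_assoc, one_mul, mul_one, mul_assoc]
  simp only [← TensorProduct.smul_tmul', TensorProduct.tmul_smul, smul_smul]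
  module

theorem one_parameter_ybe_from_algebra
    (A : Type*) [Ring A] [Algebra ℝ A] (q : ℝ)
    (S : ℝ → (A ⊗[ℝ] A →ₗ[ℝ] A ⊗[ℝ] A))
    (hS : ∀ lam : ℝ, ∀ a b : A, S lam (a ⊗ₜ[ℝ] b) =
      (Real.exp lam - 1) • ((1 : A) ⊗ₜ[ℝ] (a * b)) +
      (q * (Real.exp lam - 1)) • ((a * b) ⊗ₜ[ℝ] (1 : A)) -
      (Real.exp lam - q) • (b ⊗ₜ[ℝ] a)) :
    ∀ lam₁ lam₂ lam₃ : ℝ,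
      leg12 (S (lam₁ - lam₂)) ∘ₗ leg13 (S (lam₁ - lam₃)) ∘ₗ leg23 (S (lam₂ - lam₃)) =
      leg23 (S (lam₂ - lam₃)) ∘ₗ leg13 (S (lam₁ - lam₃)) ∘ₗ leg12 (S (lam₁ - lam₂)) := by
  have hS_eq : ∀ lam, S lam = rMatrix A q (Real.exp lam) := fun lam =>
    TensorProduct.ext' (hS lam)
  intro lam₁ lam₂ lam₃
  have hexp : Real.exp (lam₁ - lam₃) = Real.exp (lam₁ - lam₂) * Real.exp (lam₂ - lam₃) := by
    rw [← Real.exp_add, sub_add_sub_cancel]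
  simp only [hS_eq, hexp]
  exact rMatrix_yangBaxter q _ _
end
end

section
/- Let A be an associative unital ℝ-algebra, q ∈ ℝ, and λ ∈ ℝ such that e^λ ≠ q and e^λ ≠ 1/q (with q ≠ 0). Then S(λ)(a⊗b) = (e^λ−1)·1⊗ab + q(e^λ−1)·ab⊗1 − (e^λ−q)·b⊗a is invertible with inverse S⁻¹(λ)(a⊗b) = [(e^λ−1)/((qe^λ−1)(e^λ−q))]·ba⊗1 + [q(e^λ−1)/((qe^λ−1)(e^λ−q))]·1⊗ba − [1/(e^λ−q)]·b⊗a. -/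
open TensorProduct LinearMap

noncomputable section

variable {k : Type*} [Field k]

/-! Both operators are combinations of `a ⊗ b ↦ 1 ⊗ ab` (resp. `1 ⊗ ba`), `ab ⊗ 1` (resp. `ba ⊗ 1`)
and the flip. On `1 ⊗ c` and `c ⊗ 1` the products collapse, so such an operator with coefficients
`α, β, -γ` acts there through `α + β - γ` and the flip alone. Hence either composite is the
identity once three scalar identities hold; for `S(λ)` and `S⁻¹(λ)` they are rational identities
in `e^λ` and `q` with denominators `e^λ - q` and `q e^λ - 1`. -/

section MulTensorForms

variable {K A : Type*} [CommRing K] [Ring A] [Algebra K A]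
  {M N : A ⊗[K] A →ₗ[K] A ⊗[K] A} {α β γ α' β' γ' : K}

theorem comp_eq_id_of_mul_tensor_forms
    (hM : ∀ a b : A, M (a ⊗ₜ b) =
      α • ((1 : A) ⊗ₜ (a * b)) + β • ((a * b) ⊗ₜ (1 : A)) - γ • (b ⊗ₜ a))
    (hN : ∀ a b : A, N (a ⊗ₜ b) =
      α' • ((b * a) ⊗ₜ (1 : A)) + β' • ((1 : A) ⊗ₜ (b * a)) - γ' • (b ⊗ₜ a))
    (hγ : γ * γ' = 1) (hα : (α + β - γ) * α' = α * γ') (hβ : (α + β - γ) * β' = β * γ') :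
    N ∘ₗ M = LinearMap.id := by
  refine TensorProduct.ext' fun a b => ?_
  simp only [comp_apply, hM, hN, map_add, map_sub, map_smul, id_apply, one_mul, mul_one]
  match_scalars
  · linear_combination hα
  · linear_combination hβ
  · linear_combination hγ

theorem comp_eq_id_of_mul_tensor_forms'
    (hM : ∀ a b : A, M (a ⊗ₜ b) =
      α • ((1 : A) ⊗ₜ (a * b)) + β • ((a * b) ⊗ₜ (1 : A)) - γ • (b ⊗ₜ a))
    (hN : ∀ a b : A, N (a ⊗ₜ b) =
      α' • ((b * a) ⊗ₜ (1 : A)) + β' • ((1 : A) ⊗ₜ (b * a)) - γ' • (b ⊗ₜ a))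
    (hγ : γ * γ' = 1) (hα : (α' + β' - γ') * α = α' * γ) (hβ : (α' + β' - γ') * β = β' * γ) :
    M ∘ₗ N = LinearMap.id := by
  refine TensorProduct.ext' fun a b => ?_
  simp only [comp_apply, hM, hN, map_add, map_sub, map_smul, id_apply, one_mul, mul_one]
  match_scalars
  · linear_combination hα
  · linear_combination hβ
  · linear_combination hγ

end MulTensorForms

theorem one_parameter_operator_inverse_general
    (A : Type*) [Ring A] [Algebra ℝ A] (q lam : ℝ)
    (h1 : Real.exp lam ≠ q) (h2 : Real.exp lam ≠ 1 / q)
    (S T : A ⊗[ℝ] A →ₗ[ℝ] A ⊗[ℝ] A)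
    (hS : ∀ a b : A, S (a ⊗ₜ[ℝ] b) =
      (Real.exp lam - 1) • ((1 : A) ⊗ₜ[ℝ] (a * b)) +
      (q * (Real.exp lam - 1)) • ((a * b) ⊗ₜ[ℝ] (1 : A)) -
      (Real.exp lam - q) • (b ⊗ₜ[ℝ] a))
    (hT : ∀ a b : A, T (a ⊗ₜ[ℝ] b) =
      ((Real.exp lam - 1) / ((q * Real.exp lam - 1) * (Real.exp lam - q))) •
        ((b * a) ⊗ₜ[ℝ] (1 : A)) +
      (q * (Real.exp lam - 1) / ((q * Real.exp lam - 1) * (Real.exp lam - q))) •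
        ((1 : A) ⊗ₜ[ℝ] (b * a)) -
      (1 / (Real.exp lam - q)) • (b ⊗ₜ[ℝ] a)) :
    T ∘ₗ S = LinearMap.id ∧ S ∘ₗ T = LinearMap.id := by
  set e := Real.exp lam
  have he : e - q ≠ 0 := sub_ne_zero.mpr h1
  have hqe : e * q - 1 ≠ 0 := fun h =>
    h2 (eq_one_div_of_mul_eq_one_left (by linear_combination h))
  refine ⟨comp_eq_id_of_mul_tensor_forms hS hT ?_ ?_ ?_,
    comp_eq_id_of_mul_tensor_forms' hS hT ?_ ?_ ?_⟩ <;>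
  field_simp <;> ring

theorem one_parameter_operator_inverse
    (A : Type*) [Ring A] [Algebra ℝ A] (q lam : ℝ) (hq : q ≠ 0)
    (h1 : Real.exp lam ≠ q) (h2 : Real.exp lam ≠ 1 / q)
    (S T : A ⊗[ℝ] A →ₗ[ℝ] A ⊗[ℝ] A)
    (hS : ∀ a b : A, S (a ⊗ₜ[ℝ] b) =
      (Real.exp lam - 1) • ((1 : A) ⊗ₜ[ℝ] (a * b)) +
      (q * (Real.exp lam - 1)) • ((a * b) ⊗ₜ[ℝ] (1 : A)) -
      (Real.exp lam - q) • (b ⊗ₜ[ℝ] a))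
    (hT : ∀ a b : A, T (a ⊗ₜ[ℝ] b) =
      ((Real.exp lam - 1) / ((q * Real.exp lam - 1) * (Real.exp lam - q))) •
        ((b * a) ⊗ₜ[ℝ] (1 : A)) +
      (q * (Real.exp lam - 1) / ((q * Real.exp lam - 1) * (Real.exp lam - q))) •
        ((1 : A) ⊗ₜ[ℝ] (b * a)) -
      (1 / (Real.exp lam - q)) • (b ⊗ₜ[ℝ] a)) :
    T ∘ₗ S = LinearMap.id ∧ S ∘ₗ T = LinearMap.id :=
  one_parameter_operator_inverse_general A q lam h1 h2 S T hS hT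
end
end

section
/- Let L be a Lie algebra over k, z ∈ Z(L), and α ∈ k. Then r: L⊗L → L⊗L, x⊗y ↦ [x,y]⊗z + α·x⊗y, satisfies the classical Yang-Baxter equation [r¹², r¹³] + [r¹², r²³] + [r¹³, r²³] = 0, where the brackets are commutators of operators on L⊗L⊗L. -/
open TensorProduct LinearMap

noncomputable section

variable {k : Type*} [Field k]

/-!
Write `r = r₀ + α • 1` with `r₀ (x ⊗ y) = ⁅x, y⁆ ⊗ z`. Each leg sends `1` to `1`, and scalar
multiples of the identity commute with everything, so the `α • 1` part drops out of every
commutator. For `r₀`, centrality of `z` kills the three compositions in which a leg of `r₀`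
brackets against the `z` produced by the other one; the remaining three add up on `x ⊗ y ⊗ w` to
`(⁅⁅x, w⁆, y⁆ - ⁅⁅x, y⁆, w⁆ + ⁅x, ⁅y, w⁆⁆) ⊗ z ⊗ z`, which vanishes by the Jacobi identity.
-/

theorem lie_add_smul_one_add_smul_one {R A : Type*} [CommRing R] [Ring A] [Algebra R A]
    (a b : A) (c d : R) : ⁅a + c • 1, b + d • 1⁆ = ⁅a, b⁆ := by
  simp only [Ring.lie_def, add_mul, mul_add, smul_mul_assoc, mul_smul_comm, one_mul, mul_one]
  module

section Legs

variable {V : Type*} [AddCommGroup V] [Module k V]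

def classicalYangBaxter (R : Module.End k (V ⊗[k] V)) : Module.End k (V ⊗[k] (V ⊗[k] V)) :=
  ⁅leg12 R, leg13 R⁆ + ⁅leg12 R, leg23 R⁆ + ⁅leg13 R, leg23 R⁆

theorem leg12_add_smul_one (R : Module.End k (V ⊗[k] V)) (c : k) :
    leg12 (R + c • 1) = leg12 R + c • 1 := by
  ext x y w
  simp [leg12, smul_tmul']

theorem leg23_add_smul_one (R : Module.End k (V ⊗[k] V)) (c : k) :
    leg23 (R + c • 1) = leg23 R + c • 1 := by
  ext x y w
  simp [leg23]

theorem leg13_add_smul_one (R : Module.End k (V ⊗[k] V)) (c : k) :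
    leg13 (R + c • 1) = leg13 R + c • 1 := by
  ext x y w
  simp [leg13, leg12, smul_tmul']

theorem classicalYangBaxter_add_smul_one (R : Module.End k (V ⊗[k] V)) (c : k) :
    classicalYangBaxter (R + c • 1) = classicalYangBaxter R := by
  simp only [classicalYangBaxter, leg12_add_smul_one, leg13_add_smul_one, leg23_add_smul_one,
    lie_add_smul_one_add_smul_one]

end Legs

section CentralBracket

variable {L : Type*} [LieRing L] [LieAlgebra k L]

def centralBracket (z : L) : Module.End k (L ⊗[k] L) :=
  (TensorProduct.mk k L L).flip z ∘ₗ
    TensorProduct.lift (LieModule.toEnd k L L : L →ₗ[k] Module.End k L)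

@[simp]
theorem centralBracket_tmul (z x y : L) :
    centralBracket (k := k) z (x ⊗ₜ y) = ⁅x, y⁆ ⊗ₜ z := rfl

theorem leg12_centralBracket_tmul (z x y w : L) :
    leg12 (centralBracket (k := k) z) (x ⊗ₜ (y ⊗ₜ w)) = ⁅x, y⁆ ⊗ₜ (z ⊗ₜ w) := rfl

theorem leg13_centralBracket_tmul (z x y w : L) :
    leg13 (centralBracket (k := k) z) (x ⊗ₜ (y ⊗ₜ w)) = ⁅x, w⁆ ⊗ₜ (y ⊗ₜ z) := rfl

theorem leg23_centralBracket_tmul (z x y w : L) :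
    leg23 (centralBracket (k := k) z) (x ⊗ₜ (y ⊗ₜ w)) = x ⊗ₜ (⁅y, w⁆ ⊗ₜ z) := rfl

theorem classicalYangBaxter_centralBracket {z : L} (hz : z ∈ LieAlgebra.center k L) :
    classicalYangBaxter (centralBracket (k := k) z) = 0 := by
  have hzr : ∀ x : L, ⁅x, z⁆ = 0 := hz
  have hzl : ∀ x : L, ⁅z, x⁆ = 0 := fun x => by rw [← lie_skew, hzr, neg_zero]
  ext x y w
  simp only [AlgebraTensorModule.curry_apply, curry_apply, LinearMap.coe_restrictScalars,
    classicalYangBaxter, Ring.lie_def, LinearMap.add_apply, LinearMap.sub_apply,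
    Module.End.mul_apply, LinearMap.zero_apply, leg12_centralBracket_tmul,
    leg13_centralBracket_tmul, leg23_centralBracket_tmul]
  have jacobi : ⁅⁅x, w⁆, y⁆ - ⁅⁅x, y⁆, w⁆ + ⁅x, ⁅y, w⁆⁆ = 0 := by
    rw [leibniz_lie, ← lie_skew y]
    abel
  simp only [hzl, hzr, zero_tmul, tmul_zero, sub_self, sub_zero, add_zero, ← sub_tmul,
    ← add_tmul, jacobi]

end CentralBracket

theorem classical_ybe_from_lie_algebra
    (L : Type*) [LieRing L] [LieAlgebra k L]
    (z : L) (hz : z ∈ LieAlgebra.center k L) (α : k)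
    (r : L ⊗[k] L →ₗ[k] L ⊗[k] L)
    (hr : ∀ x y : L, r (x ⊗ₜ[k] y) = ⁅x, y⁆ ⊗ₜ[k] z + α • (x ⊗ₜ[k] y)) :
    (leg12 r ∘ₗ leg13 r - leg13 r ∘ₗ leg12 r) +
    (leg12 r ∘ₗ leg23 r - leg23 r ∘ₗ leg12 r) +
    (leg13 r ∘ₗ leg23 r - leg23 r ∘ₗ leg13 r) = 0 := by
  obtain rfl : r = centralBracket z + α • 1 := TensorProduct.ext' fun x y => by simp [hr]
  change classicalYangBaxter _ = 0
  rw [classicalYangBaxter_add_smul_one, classicalYangBaxter_centralBracket hz]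
end
end

section
/- A Lie algebra (L, [,]) admits a Poisson algebra structure in which the associative product equals the Lie bracket (x*y = [x,y] for all x,y) if and only if [x,y] ∈ Z(L) for all x, y ∈ L. -/
/-! The Leibniz rule for `x * y = ⁅x, y⁆` is the Jacobi identity, so only associativity matters.
Leibniz gives `⁅x, ⁅w, y⁆⁆ = ⁅⁅x, w⁆, y⁆ + ⁅w, ⁅x, y⁆⁆`, and associativity cancels the first two
terms, leaving `⁅w, ⁅x, y⁆⁆ = 0`. Conversely, if brackets are central then both sides of the
associativity law vanish. -/

theorem lie_assoc_iff_lie_lie_eq_zero (L : Type*) [LieRing L] :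
    (∀ x y z : L, ⁅⁅x, y⁆, z⁆ = ⁅x, ⁅y, z⁆⁆) ↔ ∀ x y z : L, ⁅x, ⁅y, z⁆⁆ = 0 := by
  constructor
  · intro hassoc w x y
    have h := leibniz_lie x w y
    rwa [hassoc x w y, left_eq_add] at h
  · intro hzero x y z
    rw [hzero x y z, ← lie_skew, hzero z x y, neg_zero]

theorem poisson_structure_with_product_eq_bracket_iff_general
    (k : Type*) [Field k]
    (L : Type*) [LieRing L] [LieAlgebra k L] :
    ((∀ x y z : L, ⁅⁅x, y⁆, z⁆ = ⁅x, ⁅y, z⁆⁆) ∧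
      (∀ x y z : L, ⁅x, ⁅y, z⁆⁆ = ⁅⁅x, y⁆, z⁆ + ⁅y, ⁅x, z⁆⁆)) ↔
    (∀ x y : L, ⁅x, y⁆ ∈ LieAlgebra.center k L) := by
  simp only [LieModule.mem_maxTrivSubmodule]
  rw [and_iff_left fun x y z => leibniz_lie x y z, lie_assoc_iff_lie_lie_eq_zero]
  exact ⟨fun h x y w => h w x y, fun h w x y => h x y w⟩

theorem poisson_structure_with_product_eq_bracket_iff
    (k : Type*) [Field k] (h2 : (2 : k) ≠ 0) (h3 : (3 : k) ≠ 0)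
    (L : Type*) [LieRing L] [LieAlgebra k L] :
    ((∀ x y z : L, ⁅⁅x, y⁆, z⁆ = ⁅x, ⁅y, z⁆⁆) ∧
      (∀ x y z : L, ⁅x, ⁅y, z⁆⁆ = ⁅⁅x, y⁆, z⁆ + ⁅y, ⁅x, z⁆⁆)) ↔
    (∀ x y : L, ⁅x, y⁆ ∈ LieAlgebra.center k L) :=
  poisson_structure_with_product_eq_bracket_iff_general k L
end

section
/- Let L be a Lie algebra over k with center Z(L), and suppose the map φ(x⊗y) = [x,y]⊗z + y⊗x (for a fixed z ∈ Z(L)) is used to define a functor from Lie algebras: for a Lie algebra map f: L₁ → L₂ extended to L₁⊕kx₀ → L₂⊕kx₀ with f(x₀)=x₀, one has (f⊗f)∘φ_{L₁'} = φ_{L₂'}∘(f⊗f) where L' = L⊕kx₀ with x₀ central and φ_{L'}(x⊗y) = [x,y]⊗x₀ + y⊗x. Conversely, if a linear map f with f(x₀)=x₀ satisfies (f⊗f)∘φ_{L₁'} = φ_{L₂'}∘(f⊗f), then f restricted to L₁ is a Lie algebra homomorphism into L₂' (i.e., f([x,y]) = [f(x),f(y)] for all x,y ∈ L₁). -/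
/-!
Since `φ(p ⊗ q) = [p, q] ⊗ x₀ + q ⊗ p`, the flip term commutes with every `g ⊗ g`, so for a linear
map `g` fixing `x₀` the intertwining relation reduces to `g [p, q] ⊗ x₀ = [g p, g q] ⊗ x₀`; and
`- ⊗ x₀` is injective because `x₀ ≠ 0`. Hence `g` intertwines the two maps `φ` exactly when it
preserves the extended bracket, which holds for `f ⊕ id` when `f` is a Lie algebra map.
-/

open TensorProduct LinearMap

noncomputable section

variable {k : Type*} [Field k]

/-- The bracket on L' = L + k*x0 with x0 central: [(x,a),(y,b)] = ([x,y], 0). -/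
def brExt {L : Type*} [LieRing L] [LieAlgebra k L] (p q : L × k) : L × k :=
  (⁅p.1, q.1⁆, 0)

theorem TensorProduct.tmul_left_injective_of_ne_zero {K V W : Type*} [Field K]
    [AddCommGroup V] [Module K V] [AddCommGroup W] [Module K W] {w : W} (hw : w ≠ 0) :
    Function.Injective fun v : V => v ⊗ₜ[K] w := by
  obtain ⟨ξ, hξ⟩ := Module.Projective.exists_dual_eq_one K hw
  intro v v' h
  simpa [hξ] using
    congrArg ((TensorProduct.rid K V).toLinearMap ∘ₗ TensorProduct.map LinearMap.id ξ) h

section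

variable {L₁ L₂ : Type*} [LieRing L₁] [LieAlgebra k L₁] [LieRing L₂] [LieAlgebra k L₂]

theorem LieHom.prodMap_id_brExt (f : L₁ →ₗ⁅k⁆ L₂) (p q : L₁ × k) :
    f.toLinearMap.prodMap LinearMap.id (brExt p q) =
      brExt (f.toLinearMap.prodMap LinearMap.id p) (f.toLinearMap.prodMap LinearMap.id q) := by
  simp [brExt]

theorem map_comp_eq_comp_map_iff_brExt
    {φ₁ : (L₁ × k) ⊗[k] (L₁ × k) →ₗ[k] (L₁ × k) ⊗[k] (L₁ × k)}
    {φ₂ : (L₂ × k) ⊗[k] (L₂ × k) →ₗ[k] (L₂ × k) ⊗[k] (L₂ × k)}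
    (hφ₁ : ∀ p q : L₁ × k, φ₁ (p ⊗ₜ[k] q) = brExt p q ⊗ₜ[k] ((0 : L₁), (1 : k)) + q ⊗ₜ[k] p)
    (hφ₂ : ∀ p q : L₂ × k, φ₂ (p ⊗ₜ[k] q) = brExt p q ⊗ₜ[k] ((0 : L₂), (1 : k)) + q ⊗ₜ[k] p)
    {g : L₁ × k →ₗ[k] L₂ × k} (hg : g ((0 : L₁), (1 : k)) = ((0 : L₂), (1 : k))) :
    TensorProduct.map g g ∘ₗ φ₁ = φ₂ ∘ₗ TensorProduct.map g g ↔
      ∀ p q : L₁ × k, g (brExt p q) = brExt (g p) (g q) := by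
  have hx₀ : ((0 : L₂), (1 : k)) ≠ 0 := by simp [Prod.ext_iff]
  have intertwines_tmul_iff : ∀ p q : L₁ × k,
      (TensorProduct.map g g ∘ₗ φ₁) (p ⊗ₜ[k] q) = (φ₂ ∘ₗ TensorProduct.map g g) (p ⊗ₜ[k] q) ↔
        g (brExt p q) = brExt (g p) (g q) := by
    intro p q
    simp only [LinearMap.comp_apply, map_tmul, hφ₁, hφ₂, map_add, hg, add_left_inj]
    exact (tmul_left_injective_of_ne_zero hx₀).eq_iff
  constructor
  · intro h p q
    exact (intertwines_tmul_iff p q).1 (congrArg (· (p ⊗ₜ[k] q)) h)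
  · intro h
    exact TensorProduct.ext' fun p q => (intertwines_tmul_iff p q).2 (h p q)

end

theorem lie_algebra_functor_to_yb_structures
    (L₁ L₂ : Type*) [LieRing L₁] [LieAlgebra k L₁] [LieRing L₂] [LieAlgebra k L₂]
    (φ₁ : (L₁ × k) ⊗[k] (L₁ × k) →ₗ[k] (L₁ × k) ⊗[k] (L₁ × k))
    (φ₂ : (L₂ × k) ⊗[k] (L₂ × k) →ₗ[k] (L₂ × k) ⊗[k] (L₂ × k))
    (hφ₁ : ∀ p q : L₁ × k,
      φ₁ (p ⊗ₜ[k] q) = brExt p q ⊗ₜ[k] (((0 : L₁), (1 : k)) : L₁ × k) + q ⊗ₜ[k] p)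
    (hφ₂ : ∀ p q : L₂ × k,
      φ₂ (p ⊗ₜ[k] q) = brExt p q ⊗ₜ[k] (((0 : L₂), (1 : k)) : L₂ × k) + q ⊗ₜ[k] p) :
    (∀ f : L₁ →ₗ⁅k⁆ L₂,
      TensorProduct.map (f.toLinearMap.prodMap LinearMap.id)
          (f.toLinearMap.prodMap LinearMap.id) ∘ₗ φ₁ =
        φ₂ ∘ₗ TensorProduct.map (f.toLinearMap.prodMap LinearMap.id)
          (f.toLinearMap.prodMap LinearMap.id)) ∧
    (∀ g : L₁ × k →ₗ[k] L₂ × k,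
      g (((0 : L₁), (1 : k)) : L₁ × k) = (((0 : L₂), (1 : k)) : L₂ × k) →
      TensorProduct.map g g ∘ₗ φ₁ = φ₂ ∘ₗ TensorProduct.map g g →
      ∀ x y : L₁, g ((⁅x, y⁆, (0 : k))) = brExt (g ((x, (0 : k)))) (g ((y, (0 : k))))) := by
  refine ⟨fun f => ?_, fun g hg h x y => ?_⟩
  · rw [map_comp_eq_comp_map_iff_brExt hφ₁ hφ₂ (by simp)]
    exact f.prodMap_id_brExt
  · exact (map_comp_eq_comp_map_iff_brExt hφ₁ hφ₂ hg).1 h (x, 0) (y, 0)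
end
end

section
/- Let (C, Δ, ε) be a coalgebra over k and define ψ_C: C⊗C → C⊗C by ψ_C = Δ⊗ε + ε⊗Δ − id_{C⊗C}, i.e., ψ_C(c⊗d) = Δ(c)ε(d) + ε(c)Δ(d) − c⊗d. Then ψ_C is a Yang-Baxter operator (invertible solution of the braid equation ψ¹²ψ²³ψ¹² = ψ²³ψ¹²ψ²³), and it satisfies (id⊗ε)∘ψ_C = ε⊗id and (ε⊗id)∘ψ_C = id⊗ε. -/
open TensorProduct LinearMap

noncomputable section

variable {k : Type*} [Field k]

/-!
Write `ψ_C = N - 1` with `N = Δ ∘ s`, where `s (c ⊗ d) = ε(d) c + ε(c) d`. The counit laws give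
`s ∘ Δ = 2`, hence `N² = 2N` and `ψ_C² = 1`, and `(id ⊗ ε) ∘ N = (ε ⊗ id) ∘ N = s`.

For `X = N¹²` and `Y = N²³` we again have `X² = 2X` and `Y² = 2Y`, and then the braid relation
for `X - 1`, `Y - 1` is equivalent to `XYX - X = YXY - Y`. Factor `X = D₁ S₁`, `Y = D₂ S₂`
through `C ⊗ C`, where `Dᵢ` applies `Δ` to one factor and `Sᵢ` applies `s` to two. The counit
laws give `S₁ D₂ = Δ ∘ (ε ⊗ id) + 1` and `S₂ D₁ = Δ ∘ (id ⊗ ε) + 1`, which turns `XYX - X` into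
`D₁ Δ ∘ e ∘ S₁` and `YXY - Y` into `D₂ Δ ∘ e' ∘ S₂` for explicit counit contractions `e`, `e'`.
Coassociativity gives `D₁ Δ = D₂ Δ`, and `e ∘ S₁ = e' ∘ S₂` since both send `c ⊗ d ⊗ f` to
`2 (ε(d) ε(f) c + ε(c) ε(f) d + ε(c) ε(d) f)`.
-/

open Coalgebra

section Ring

variable {A : Type*} [Ring A] {x y : A}

lemma sub_one_mul_self_of_mul_self_eq_two_mul (hx : x * x = 2 * x) : (x - 1) * (x - 1) = 1 := by
  have : (x - 1) * (x - 1) = x * x - 2 * x + 1 := by noncomm_ring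
  rw [this, hx, sub_self, zero_add]

lemma sub_one_braid_of_mul_self_eq_two_mul (hx : x * x = 2 * x) (hy : y * y = 2 * y)
    (hxy : x * y * x - x = y * x * y - y) :
    (x - 1) * ((y - 1) * (x - 1)) = (y - 1) * ((x - 1) * (y - 1)) := by
  have : (x - 1) * ((y - 1) * (x - 1)) - (y - 1) * ((x - 1) * (y - 1)) =
      (x * y * x - x) - (y * x * y - y) - (x * x - 2 * x) + (y * y - 2 * y) := by
    noncomm_ring
  simpa only [hx, hy, hxy, sub_self, add_zero, sub_eq_zero] using this

end Ring

lemma comp_add_id_comp_comp_add_id {R M N : Type*} [CommSemiring R] [AddCommMonoid M] [Module R M]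
    [AddCommMonoid N] [Module R N] (f : M →ₗ[R] N) (a b : N →ₗ[R] M) (h : a ∘ₗ f = LinearMap.id) :
    (f ∘ₗ a + LinearMap.id) ∘ₗ (f ∘ₗ b + LinearMap.id) = f ∘ₗ (b + a + b) + LinearMap.id := by
  have hfafb : (f ∘ₗ a) ∘ₗ (f ∘ₗ b) = f ∘ₗ b := by
    rw [comp_assoc, ← comp_assoc b f a, h, id_comp]
  rw [add_comp, comp_add, comp_add, hfafb, comp_add, comp_add, id_comp, comp_id, id_comp]
  abel

section LegAlgHom

variable {V : Type*} [AddCommGroup V] [Module k V]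

def leg12AlgHom : Module.End k (V ⊗[k] V) →ₐ[k] Module.End k (V ⊗[k] (V ⊗[k] V)) :=
  ((TensorProduct.assoc k V V V).conjAlgEquiv k).toAlgHom.comp (Module.End.rTensorAlgHom k _ V)

lemma leg12AlgHom_apply (f : Module.End k (V ⊗[k] V)) : leg12AlgHom f = leg12 f := rfl

lemma leg23AlgHom_apply (f : Module.End k (V ⊗[k] V)) :
    Module.End.lTensorAlgHom k _ V f = leg23 f := rfl

end LegAlgHom

section CounitContraction

variable {R : Type*} [CommSemiring R] {C : Type*} [AddCommMonoid C] [Module R C]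
  [CoalgebraStruct R C] {M N : Type*} [AddCommMonoid M] [Module R M]
  [AddCommMonoid N] [Module R N]

variable (C M) in
def counitLeft : C ⊗[R] M →ₗ[R] M :=
  (TensorProduct.lid R M).toLinearMap ∘ₗ (counit (R := R) (A := C)).rTensor M

variable (C M) in
def counitRight : M ⊗[R] C →ₗ[R] M :=
  (TensorProduct.rid R M).toLinearMap ∘ₗ (counit (R := R) (A := C)).lTensor M

@[simp] lemma counitLeft_tmul (c : C) (m : M) :
    counitLeft C M (c ⊗ₜ[R] m) = counit (R := R) c • m := by
  simp [counitLeft]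

@[simp] lemma counitRight_tmul (m : M) (c : C) :
    counitRight C M (m ⊗ₜ[R] c) = counit (R := R) c • m := by
  simp [counitRight]

lemma counitLeft_comp_lTensor (f : M →ₗ[R] N) :
    counitLeft C N ∘ₗ f.lTensor C = f ∘ₗ counitLeft C M :=
  TensorProduct.ext' fun c m => by simp

lemma counitRight_comp_rTensor (f : M →ₗ[R] N) :
    counitRight C N ∘ₗ f.rTensor C = f ∘ₗ counitRight C M :=
  TensorProduct.ext' fun m c => by simp

lemma rTensor_counitLeft_comp_assoc_symm :
    (counitLeft C M).rTensor N ∘ₗ (TensorProduct.assoc R C M N).symm.toLinearMap =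
      counitLeft C (M ⊗[R] N) :=
  TensorProduct.ext_threefold' fun c m n => by simp [TensorProduct.smul_tmul']

lemma lTensor_counitRight_comp_assoc :
    (counitRight C N).lTensor M ∘ₗ (TensorProduct.assoc R M N C).toLinearMap =
      counitRight C (M ⊗[R] N) :=
  TensorProduct.ext_threefold fun m n c => by simp

lemma lTensor_counitLeft_comp_assoc :
    (counitLeft C N).lTensor M ∘ₗ (TensorProduct.assoc R M C N).toLinearMap =
      (counitRight C M).rTensor N :=
  TensorProduct.ext_threefold fun m c n => by simp [TensorProduct.smul_tmul']

end CounitContraction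

section CoalgebraMaps

variable {R : Type*} [CommSemiring R] {C : Type*} [AddCommMonoid C] [Module R C] [Coalgebra R C]

lemma counitLeft_comp_comul : counitLeft C C ∘ₗ comul (R := R) = LinearMap.id := by
  rw [counitLeft, comp_assoc, rTensor_counit_comp_comul]
  ext c
  simp

lemma counitRight_comp_comul : counitRight C C ∘ₗ comul (R := R) = LinearMap.id := by
  rw [counitRight, comp_assoc, lTensor_counit_comp_comul]
  ext c
  simp

variable (R C)

def counitSum : C ⊗[R] C →ₗ[R] C := counitRight C C + counitLeft C C

/-- The map `Δ ⊗ ε + ε ⊗ Δ`; thus `ψ_C = comulCounit R C - 1`. -/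
def comulCounit : Module.End R (C ⊗[R] C) := comul ∘ₗ counitSum R C

def comulLeg1 : C ⊗[R] C →ₗ[R] C ⊗[R] (C ⊗[R] C) :=
  (TensorProduct.assoc R C C C).toLinearMap ∘ₗ (comul (R := R) (A := C)).rTensor C

def comulLeg2 : C ⊗[R] C →ₗ[R] C ⊗[R] (C ⊗[R] C) := (comul (R := R) (A := C)).lTensor C

def counitSumLeg12 : C ⊗[R] (C ⊗[R] C) →ₗ[R] C ⊗[R] C :=
  (counitSum R C).rTensor C ∘ₗ (TensorProduct.assoc R C C C).symm.toLinearMap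

def counitSumLeg23 : C ⊗[R] (C ⊗[R] C) →ₗ[R] C ⊗[R] C := (counitSum R C).lTensor C

variable {R C}

lemma counitSum_comp_comul : counitSum R C ∘ₗ comul = LinearMap.id + LinearMap.id := by
  rw [counitSum, add_comp, counitRight_comp_comul, counitLeft_comp_comul]

lemma comulCounit_mul_self : comulCounit R C * comulCounit R C = 2 * comulCounit R C := by
  calc comulCounit R C * comulCounit R C
      = comul ∘ₗ (counitSum R C ∘ₗ comul) ∘ₗ counitSum R C := rfl
    _ = 2 * comulCounit R C := by
      rw [counitSum_comp_comul, add_comp, id_comp, comp_add, two_mul]; rfl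

lemma counitRight_comp_comulCounit : counitRight C C ∘ₗ comulCounit R C = counitSum R C := by
  rw [comulCounit, ← comp_assoc, counitRight_comp_comul, id_comp]

lemma counitLeft_comp_comulCounit : counitLeft C C ∘ₗ comulCounit R C = counitSum R C := by
  rw [comulCounit, ← comp_assoc, counitLeft_comp_comul, id_comp]

lemma counitSumLeg12_comp_comulLeg2 :
    counitSumLeg12 R C ∘ₗ comulLeg2 R C = comul ∘ₗ counitLeft C C + LinearMap.id := by
  have h : counitSumLeg12 R C = (counitLeft C C).lTensor C + counitLeft C (C ⊗[R] C) := by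
    rw [counitSumLeg12, counitSum, rTensor_add, add_comp, rTensor_counitLeft_comp_assoc_symm,
      ← lTensor_counitLeft_comp_assoc, comp_assoc, LinearEquiv.comp_coe,
      LinearEquiv.symm_trans_self, LinearEquiv.refl_toLinearMap, comp_id]
  rw [h, add_comp, comulLeg2, ← lTensor_comp, counitLeft_comp_comul, lTensor_id,
    counitLeft_comp_lTensor, add_comm]

lemma counitSumLeg23_comp_comulLeg1 :
    counitSumLeg23 R C ∘ₗ comulLeg1 R C = comul ∘ₗ counitRight C C + LinearMap.id := by
  have h : counitSumLeg23 R C ∘ₗ (TensorProduct.assoc R C C C).toLinearMap =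
      counitRight C (C ⊗[R] C) + (counitRight C C).rTensor C := by
    rw [counitSumLeg23, counitSum, lTensor_add, add_comp, lTensor_counitRight_comp_assoc,
      lTensor_counitLeft_comp_assoc]
  rw [comulLeg1, ← comp_assoc, h, add_comp, counitRight_comp_rTensor, ← rTensor_comp,
    counitRight_comp_comul, rTensor_id]

lemma comulLeg1_comp_comul : comulLeg1 R C ∘ₗ comul = comulLeg2 R C ∘ₗ comul := by
  rw [comulLeg1, comulLeg2, comp_assoc, coassoc]

lemma comp_counitSumLeg12_eq_comp_counitSumLeg23 :
    (counitRight C C + counitLeft C C + counitRight C C) ∘ₗ counitSumLeg12 R C =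
      (counitLeft C C + counitRight C C + counitLeft C C) ∘ₗ counitSumLeg23 R C := by
  refine TensorProduct.ext_threefold' fun c d e => ?_
  simp only [counitSumLeg12, counitSumLeg23, counitSum, coe_comp, Function.comp_apply,
    LinearEquiv.coe_coe, assoc_symm_tmul, rTensor_tmul, lTensor_tmul, LinearMap.add_apply,
    counitLeft_tmul, counitRight_tmul, add_tmul, tmul_add, map_add, map_smul, smul_smul]
  module

end CoalgebraMaps

section CoalgebraLegs

variable {C : Type*} [AddCommGroup C] [Module k C] [Coalgebra k C]

lemma leg12_comulCounit : leg12 (comulCounit k C) = comulLeg1 k C ∘ₗ counitSumLeg12 k C := by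
  rw [leg12, comulCounit, rTensor_comp, comulLeg1, counitSumLeg12]
  simp only [comp_assoc]

lemma leg23_comulCounit : leg23 (comulCounit k C) = comulLeg2 k C ∘ₗ counitSumLeg23 k C :=
  lTensor_comp _ _ _

lemma leg12_mul_leg23_mul_leg12_sub :
    leg12 (comulCounit k C) * leg23 (comulCounit k C) * leg12 (comulCounit k C) -
        leg12 (comulCounit k C) =
      leg23 (comulCounit k C) * leg12 (comulCounit k C) * leg23 (comulCounit k C) -
        leg23 (comulCounit k C) := by
  simp only [Module.End.mul_eq_comp, leg12_comulCounit, leg23_comulCounit]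
  calc _ = comulLeg1 k C ∘ₗ ((counitSumLeg12 k C ∘ₗ comulLeg2 k C) ∘ₗ
          (counitSumLeg23 k C ∘ₗ comulLeg1 k C) - LinearMap.id) ∘ₗ counitSumLeg12 k C := by
        simp only [sub_comp, comp_sub, id_comp, comp_assoc]
    _ = (comulLeg1 k C ∘ₗ comul) ∘ₗ
          (counitRight C C + counitLeft C C + counitRight C C) ∘ₗ counitSumLeg12 k C := by
        rw [counitSumLeg12_comp_comulLeg2, counitSumLeg23_comp_comulLeg1,
          comp_add_id_comp_comp_add_id _ _ _ counitLeft_comp_comul, add_sub_cancel_right]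
        simp only [comp_assoc]
    _ = (comulLeg2 k C ∘ₗ comul) ∘ₗ
          (counitLeft C C + counitRight C C + counitLeft C C) ∘ₗ counitSumLeg23 k C := by
        rw [comulLeg1_comp_comul, comp_counitSumLeg12_eq_comp_counitSumLeg23]
    _ = comulLeg2 k C ∘ₗ ((counitSumLeg23 k C ∘ₗ comulLeg1 k C) ∘ₗ
          (counitSumLeg12 k C ∘ₗ comulLeg2 k C) - LinearMap.id) ∘ₗ counitSumLeg23 k C := by
        rw [counitSumLeg12_comp_comulLeg2, counitSumLeg23_comp_comulLeg1,
          comp_add_id_comp_comp_add_id _ _ _ counitRight_comp_comul, add_sub_cancel_right]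
        simp only [comp_assoc]
    _ = _ := by
        simp only [sub_comp, comp_sub, id_comp, comp_assoc]

end CoalgebraLegs

theorem yb_operator_from_coalgebra
    (C : Type*) [AddCommGroup C] [Module k C] [Coalgebra k C]
    (ψ : C ⊗[k] C →ₗ[k] C ⊗[k] C)
    (hψ : ∀ c d : C, ψ (c ⊗ₜ[k] d) =
      (Coalgebra.counit (R := k) d) • Coalgebra.comul (R := k) c +
      (Coalgebra.counit (R := k) c) • Coalgebra.comul (R := k) d - c ⊗ₜ[k] d) :
    (leg12 ψ ∘ₗ leg23 ψ ∘ₗ leg12 ψ = leg23 ψ ∘ₗ leg12 ψ ∘ₗ leg23 ψ) ∧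
    Function.Bijective ψ ∧
    (TensorProduct.rid k C).toLinearMap ∘ₗ
        (Coalgebra.counit (R := k) (A := C)).lTensor C ∘ₗ ψ =
      (TensorProduct.lid k C).toLinearMap ∘ₗ
        (Coalgebra.counit (R := k) (A := C)).rTensor C ∧
    (TensorProduct.lid k C).toLinearMap ∘ₗ
        (Coalgebra.counit (R := k) (A := C)).rTensor C ∘ₗ ψ =
      (TensorProduct.rid k C).toLinearMap ∘ₗ
        (Coalgebra.counit (R := k) (A := C)).lTensor C := by
  obtain rfl : ψ = comulCounit k C - 1 :=
    TensorProduct.ext' fun c d => by simp [hψ, comulCounit, counitSum]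
  have hN := comulCounit_mul_self (R := k) (C := C)
  have hX : leg12 (comulCounit k C) * leg12 (comulCounit k C) = 2 * leg12 (comulCounit k C) := by
    simpa only [map_mul, map_ofNat, leg12AlgHom_apply] using congr_arg leg12AlgHom hN
  have hY : leg23 (comulCounit k C) * leg23 (comulCounit k C) = 2 * leg23 (comulCounit k C) := by
    simpa only [map_mul, map_ofNat, leg23AlgHom_apply] using
      congr_arg (Module.End.lTensorAlgHom k _ C) hN
  refine ⟨?_, ?_, ?_, ?_⟩
  · have h12 : leg12 (comulCounit k C - 1) = leg12 (comulCounit k C) - 1 := by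
      rw [← leg12AlgHom_apply, map_sub, map_one, leg12AlgHom_apply]
    have h23 : leg23 (comulCounit k C - 1) = leg23 (comulCounit k C) - 1 := by
      rw [← leg23AlgHom_apply, map_sub, map_one, leg23AlgHom_apply]
    rw [h12, h23]
    exact sub_one_braid_of_mul_self_eq_two_mul hX hY leg12_mul_leg23_mul_leg12_sub
  · exact Function.Involutive.bijective fun x =>
      LinearMap.congr_fun (sub_one_mul_self_of_mul_self_eq_two_mul hN) x
  · change counitRight C C ∘ₗ (comulCounit k C - 1) = counitLeft C C
    rw [comp_sub, counitRight_comp_comulCounit, counitSum, Module.End.one_eq_id, comp_id,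
      add_sub_cancel_left]
  · change counitLeft C C ∘ₗ (comulCounit k C - 1) = counitRight C C
    rw [comp_sub, counitLeft_comp_comulCounit, counitSum, Module.End.one_eq_id, comp_id,
      add_sub_cancel_right]
end
end
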